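/- Let φ be a CNF formula over n ≥ 1 variables and let G(φ) be the associated symmetric two-player game. If G(φ) admits a mixed strategy profile that is both a Nash equilibrium and envy-proof, then φ is satisfiable. -/

import Mathlib

open Finset

variable {α β : Type*}

/-- Expected utility of `u` under the product of mixed strategies `p` and `q`. -/
def EU [Fintype α] [Fintype β] (u : α → β → ℝ) (p : α → ℝ) (q : β → ℝ) : ℝ :=
  ∑ a, ∑ b, p a * q b * u a b

/-- `p` is a probability distribution (mixed strategy). -/
def IsMixed [Fintype α] (p : α → ℝ) : Prop :=
  (∀ a, 0 ≤ p a) ∧ ∑ a, p a = 1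

/-- The pure action `a` viewed as a mixed strategy. -/
def pureStrat [DecidableEq α] (a : α) : α → ℝ :=
  fun a' => if a' = a then 1 else 0

/-- `(p,q)` is a Nash equilibrium of the two-player game `({u0,u1},{α,β})`. -/
def IsNash [Fintype α] [Fintype β] [DecidableEq α] [DecidableEq β]
    (u0 u1 : α → β → ℝ) (p : α → ℝ) (q : β → ℝ) : Prop :=
  (∀ a' : α, EU u0 (pureStrat a') q ≤ EU u0 p q) ∧
  (∀ b' : β, EU u1 p (pureStrat b') ≤ EU u1 p q)

/-- `(p,q)` is immune in the two-player game `({u0,u1},{α,β})`. -/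
def IsImmune [Fintype α] [Fintype β] [DecidableEq α] [DecidableEq β]
    (u0 u1 : α → β → ℝ) (p : α → ℝ) (q : β → ℝ) : Prop :=
  (∀ a' : α, EU u1 (pureStrat a') q ≥ EU u1 p q) ∧
  (∀ b' : β, EU u0 p (pureStrat b') ≥ EU u0 p q)

/-- `(p,q)` is envy-proof in the two-player game `({u0,u1},{α,β})`. -/
def IsEnvyProof [Fintype α] [Fintype β] [DecidableEq α] [DecidableEq β]
    (u0 u1 : α → β → ℝ) (p : α → ℝ) (q : β → ℝ) : Prop :=
  (∀ a' : α, EU u0 (pureStrat a') q - EU u0 p q ≤ EU u1 (pureStrat a') q - EU u1 p q) ∧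
  (∀ b' : β, EU u1 p (pureStrat b') - EU u1 p q ≤ EU u0 p (pureStrat b') - EU u0 p q)

/-- Literals over `n` variables: a variable index together with a sign. -/
abbrev Lit (n : ℕ) := Fin n × Bool

/-- The negation of a literal. -/
def negLit {n : ℕ} (l : Lit n) : Lit n := (l.1, !l.2)

/-- The common action set `Σ = V ∪ L ∪ C ∪ {f}` of the game `G(φ)`, where `C` is the
clause set of the CNF formula `φ`: variables, literals, clauses of `φ`, and a default
action `f`. -/
abbrev Act (n : ℕ) (C : Finset (Finset (Lit n))) :=
  Fin n ⊕ (Lit n ⊕ ({c : Finset (Lit n) // c ∈ C} ⊕ Unit))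

/-- The default action `f`. -/
def fAct (n : ℕ) (C : Finset (Finset (Lit n))) : Act n C := Sum.inr (Sum.inr (Sum.inr ()))

/-- Player 0's utility in the game `G(φ)` (with `β = -n`); player 1's utility is
`fun x y => gu n C y x` by symmetry. -/
def gu (n : ℕ) (C : Finset (Finset (Lit n))) : Act n C → Act n C → ℝ
  -- (var, ·)
  | Sum.inl _, Sum.inl _ => -(n : ℝ)
  | Sum.inl i, Sum.inr (Sum.inl l) => if l.1 = i then 0 else (n : ℝ)
  | Sum.inl _, Sum.inr (Sum.inr (Sum.inl _)) => -(n : ℝ)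
  | Sum.inl _, Sum.inr (Sum.inr (Sum.inr _)) => (n : ℝ) + 1
  -- (lit, ·)
  | Sum.inr (Sum.inl l), Sum.inl i =>
      if l.1 = i then 2 * ((n : ℝ) - 1) else (n : ℝ) - 2
  | Sum.inr (Sum.inl l0), Sum.inr (Sum.inl l1) =>
      if l0 = negLit l1 then -(n : ℝ) else (n : ℝ) - 1
  | Sum.inr (Sum.inl l), Sum.inr (Sum.inr (Sum.inl c)) =>
      if l ∈ c.1 then 2 * ((n : ℝ) - 1) else (n : ℝ) - 2
  | Sum.inr (Sum.inl _), Sum.inr (Sum.inr (Sum.inr _)) => (n : ℝ) - 1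
  -- (cls, ·)
  | Sum.inr (Sum.inr (Sum.inl _)), Sum.inl _ => -(n : ℝ)
  | Sum.inr (Sum.inr (Sum.inl c)), Sum.inr (Sum.inl l) =>
      if l ∈ c.1 then 0 else (n : ℝ)
  | Sum.inr (Sum.inr (Sum.inl _)), Sum.inr (Sum.inr (Sum.inl _)) => -(n : ℝ)
  | Sum.inr (Sum.inr (Sum.inl _)), Sum.inr (Sum.inr (Sum.inr _)) => (n : ℝ) + 1
  -- (f, ·)
  | Sum.inr (Sum.inr (Sum.inr _)), Sum.inl _ => (n : ℝ)
  | Sum.inr (Sum.inr (Sum.inr _)), Sum.inr (Sum.inl _) => (n : ℝ) - 1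
  | Sum.inr (Sum.inr (Sum.inr _)), Sum.inr (Sum.inr (Sum.inl _)) => (n : ℝ)
  | Sum.inr (Sum.inr (Sum.inr _)), Sum.inr (Sum.inr (Sum.inr _)) => (n : ℝ) + 2


/-!
Summed over the variable actions, the envy-proofness constraints of a player read `n` times the
opponent's weight on `f` against `n` times the difference of the two values; so nobody plays `f`
and both values agree. A player who puts weight on a variable or clause `z` is indifferent between
`z` and `f` and unenvied at `z`, which forces the opponent off `V ∪ C` and then himself as well:
both players play literals only. Envy-proofness at `z ∈ V ∪ C` now says that the opponent puts
weight at least `1/n` on `LitSet z`, and optimality at a literal `ℓ` forbids the opponent to play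
`-ℓ`. Hence the literals played by player 1 meet every clause and contain no complementary pair
(player 0 would play neither literal of that variable), and they define a satisfying assignment.
-/

open Function

theorem sum_mul_ite_mem {R : Type*} [CommRing R] [Fintype α] [DecidableEq α] (f : α → R)
    (S : Finset α) (x y : R) :
    ∑ a, f a * (if a ∈ S then x else y) = y * ∑ a, f a + (x - y) * ∑ a ∈ S, f a := by
  calc ∑ a, f a * (if a ∈ S then x else y)
      = ∑ a, (y * f a + (x - y) * if a ∈ S then f a else 0) :=
        sum_congr rfl fun a _ => by split_ifs <;> ring
    _ = y * ∑ a, f a + (x - y) * ∑ a ∈ S, f a := by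
        rw [sum_add_distrib, ← mul_sum, ← mul_sum, sum_ite_mem, univ_inter]

theorem IsMixed.eq_of_forall_le_of_sum_mul_eq [Fintype α] {p g : α → ℝ} {c : ℝ}
    (hp : IsMixed p) (hle : ∀ a, g a ≤ c) (hsum : ∑ a, p a * g a = c) {a : α} (ha : 0 < p a) :
    g a = c := by
  have hzero : ∑ x, p x * (c - g x) = 0 := by
    simp only [mul_sub, sum_sub_distrib, ← sum_mul, hp.2, hsum, one_mul, sub_self]
  have hterm := (sum_eq_zero_iff_of_nonneg fun x _ => mul_nonneg (hp.1 x)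
    (sub_nonneg.2 (hle x))).1 hzero a (mem_univ a)
  linarith [(mul_eq_zero.1 hterm).resolve_left ha.ne']

def payoff [Fintype β] (u : α → β → ℝ) (s : β → ℝ) (a : α) : ℝ := ∑ b, s b * u a b

theorem EU_pureStrat_left [Fintype α] [Fintype β] [DecidableEq α] (u : α → β → ℝ) (a : α)
    (q : β → ℝ) : EU u (pureStrat a) q = payoff u q a := by
  simp [EU, pureStrat, payoff, mul_comm]

theorem EU_pureStrat_right [Fintype α] [Fintype β] [DecidableEq β] (u : α → β → ℝ) (p : α → ℝ)
    (b : β) : EU u p (pureStrat b) = payoff (swap u) p b := by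
  simp [EU, pureStrat, payoff, mul_comm]

theorem EU_eq_sum_payoff_left [Fintype α] [Fintype β] (u : α → β → ℝ) (p : α → ℝ)
    (q : β → ℝ) : EU u p q = ∑ a, p a * payoff u q a := by
  simp only [EU, payoff, mul_sum, mul_assoc]

theorem EU_eq_sum_payoff_right [Fintype α] [Fintype β] (u : α → β → ℝ) (p : α → ℝ)
    (q : β → ℝ) : EU u p q = ∑ b, q b * payoff (swap u) p b := by
  rw [EU, sum_comm]
  simp only [payoff, swap, mul_sum]
  exact sum_congr rfl fun b _ => sum_congr rfl fun a _ => by ring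

/-- The half of "`(r, s)` is an envy-proof Nash equilibrium of the symmetric game `u`" that
concerns the player using `r`, whose value is `v` while the opponent's is `w`. -/
structure IsEnvyProofBestReply [Fintype α] (u : α → α → ℝ) (r s : α → ℝ) (v w : ℝ) : Prop where
  isMixed : IsMixed r
  payoff_le : ∀ a, payoff u s a ≤ v
  payoff_sub_le : ∀ a, payoff u s a - payoff (swap u) s a ≤ v - w
  sum_payoff : ∑ a, r a * payoff u s a = v
  sum_swap_payoff : ∑ a, r a * payoff (swap u) s a = w

theorem isEnvyProofBestReply_of_isNash_of_isEnvyProof [Fintype α] [DecidableEq α]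
    {u : α → α → ℝ} {p q : α → ℝ} (hp : IsMixed p) (hq : IsMixed q)
    (hN : IsNash u (fun x y => u y x) p q) (hE : IsEnvyProof u (fun x y => u y x) p q) :
    IsEnvyProofBestReply u p q (EU u p q) (EU (swap u) p q) ∧
      IsEnvyProofBestReply u q p (EU (swap u) p q) (EU u p q) := by
  simp only [IsNash, IsEnvyProof, EU_pureStrat_left, EU_pureStrat_right] at hN hE
  refine ⟨⟨hp, hN.1, fun a => ?_, ?_, ?_⟩, ⟨hq, hN.2, fun b => ?_, ?_, ?_⟩⟩
  · linarith [hE.1 a]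
  · rw [EU_eq_sum_payoff_left]
  · rw [EU_eq_sum_payoff_left]
  · linarith [hE.2 b]
  · exact (EU_eq_sum_payoff_right _ p q).symm
  · exact (EU_eq_sum_payoff_right _ p q).symm

namespace IsEnvyProofBestReply

variable [Fintype α] {u : α → α → ℝ} {r s : α → ℝ} {v w : ℝ} {a : α}

theorem payoff_eq (h : IsEnvyProofBestReply u r s v w) (ha : 0 < r a) : payoff u s a = v :=
  h.isMixed.eq_of_forall_le_of_sum_mul_eq h.payoff_le h.sum_payoff ha

theorem swap_payoff_eq (h : IsEnvyProofBestReply u r s v w) (ha : 0 < r a) :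
    payoff (swap u) s a = w := by
  have hgap := h.isMixed.eq_of_forall_le_of_sum_mul_eq h.payoff_sub_le
    (by simp only [mul_sub, sum_sub_distrib, h.sum_payoff, h.sum_swap_payoff]) ha
  linarith [h.payoff_eq ha]

end IsEnvyProofBestReply

section CNFGame

variable {n : ℕ} {C : Finset (Finset (Lit n))} {r : Act n C → ℝ}

abbrev varAct (i : Fin n) : Act n C := Sum.inl i

abbrev litAct (l : Lit n) : Act n C := Sum.inr (Sum.inl l)

abbrev clauseAct (c : {c // c ∈ C}) : Act n C := Sum.inr (Sum.inr (Sum.inl c))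

def IsSetAction (z : Act n C) : Prop := (∃ i, z = varAct i) ∨ ∃ c, z = clauseAct c

/-- The paper's `LitSet z` for `z ∈ V ∪ C` (and `∅` on the other actions). -/
def litSet : Act n C → Finset (Lit n)
  | Sum.inl i => {(i, true), (i, false)}
  | Sum.inr (Sum.inr (Sum.inl c)) => c.1
  | _ => ∅

def litMass (r : Act n C → ℝ) (S : Finset (Lit n)) : ℝ := ∑ l ∈ S, r (litAct l)

def setMass (r : Act n C → ℝ) : ℝ := ∑ i, r (varAct i) + ∑ c, r (clauseAct c)

theorem sum_act (g : Act n C → ℝ) :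
    ∑ z, g z = ∑ i, g (varAct i) + ∑ l, g (litAct l) + ∑ c, g (clauseAct c) + g (fAct n C) := by
  simp only [Fintype.sum_sum_type, Fintype.sum_unique, fAct]
  ring

theorem IsMixed.setMass_add_litMass_add_fAct_eq_one (hr : IsMixed r) :
    setMass r + litMass r univ + r (fAct n C) = 1 := by
  rw [← hr.2, sum_act, setMass, litMass]
  ring

theorem IsMixed.setMass_nonneg (hr : IsMixed r) : 0 ≤ setMass r :=
  add_nonneg (sum_nonneg fun _ _ => hr.1 _) (sum_nonneg fun _ _ => hr.1 _)

theorem IsMixed.le_setMass (hr : IsMixed r) {z : Act n C} (hz : IsSetAction z) :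
    r z ≤ setMass r := by
  have hV : 0 ≤ ∑ i, r (varAct i) := sum_nonneg fun _ _ => hr.1 _
  have hK : 0 ≤ ∑ c, r (clauseAct c) := sum_nonneg fun _ _ => hr.1 _
  rw [setMass]
  rcases hz with ⟨i, rfl⟩ | ⟨c, rfl⟩
  · linarith [single_le_sum (f := fun i => r (varAct i)) (fun _ _ => hr.1 _) (mem_univ i)]
  · linarith [single_le_sum (f := fun c => r (clauseAct c)) (fun _ _ => hr.1 _) (mem_univ c)]

theorem mem_litSet_varAct {i : Fin n} {l : Lit n} : l ∈ litSet (varAct (C := C) i) ↔ l.1 = i := by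
  obtain ⟨j, b⟩ := l
  cases b <;> simp [litSet]

theorem sum_litMass_litSet_varAct :
    ∑ i, litMass r (litSet (varAct (C := C) i)) = litMass r univ := by
  simp [litMass, litSet, Fintype.sum_prod_type, add_comm]

theorem gu_setAction_litAct {z : Act n C} (hz : IsSetAction z) (l : Lit n) :
    gu n C z (litAct l) = if l ∈ litSet z then 0 else (n : ℝ) := by
  rcases hz with ⟨i, rfl⟩ | ⟨c, rfl⟩
  · simp only [mem_litSet_varAct]; rfl
  · rfl

theorem gu_litAct_setAction {z : Act n C} (hz : IsSetAction z) (l : Lit n) :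
    gu n C (litAct l) z = if l ∈ litSet z then 2 * ((n : ℝ) - 1) else (n : ℝ) - 2 := by
  rcases hz with ⟨i, rfl⟩ | ⟨c, rfl⟩
  · simp only [mem_litSet_varAct]; rfl
  · rfl

theorem payoff_fAct : payoff (gu n C) r (fAct n C) =
    ((n : ℝ) - 1) * litMass r univ + n * setMass r + ((n : ℝ) + 2) * r (fAct n C) := by
  simp only [payoff, sum_act, fAct, gu, ← sum_mul, litMass, setMass]
  ring

theorem payoff_setAction {z : Act n C} (hz : IsSetAction z) :
    payoff (gu n C) r z = n * litMass r univ - n * litMass r (litSet z) - n * setMass r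
      + ((n : ℝ) + 1) * r (fAct n C) := by
  have hlit := gu_setAction_litAct hz
  simp only [payoff, sum_act, hlit, sum_mul_ite_mem]
  rcases hz with ⟨i, rfl⟩ | ⟨c, rfl⟩ <;>
  · simp only [gu, fAct, ← sum_mul, litMass, setMass]
    ring

theorem swap_payoff_setAction {z : Act n C} (hz : IsSetAction z) :
    payoff (swap (gu n C)) r z = ((n : ℝ) - 2) * litMass r univ + n * litMass r (litSet z)
      - n * setMass r + n * r (fAct n C) := by
  have hlit := gu_litAct_setAction hz
  simp only [payoff, swap, sum_act, hlit, sum_mul_ite_mem]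
  rcases hz with ⟨i, rfl⟩ | ⟨c, rfl⟩ <;>
  · simp only [gu, fAct, ← sum_mul, litMass, setMass]
    ring

theorem payoff_sub_swap_payoff_setAction {z : Act n C} (hz : IsSetAction z) :
    payoff (gu n C) r z - payoff (swap (gu n C)) r z =
      2 * litMass r univ - 2 * n * litMass r (litSet z) + r (fAct n C) := by
  rw [payoff_setAction hz, swap_payoff_setAction hz]
  ring

theorem setMass_eq_zero (hrset : ∀ z : Act n C, IsSetAction z → r z = 0) : setMass r = 0 := by
  simp [setMass, hrset _ (Or.inl ⟨_, rfl⟩), hrset _ (Or.inr ⟨_, rfl⟩)]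

theorem IsMixed.litMass_univ_eq_one (hr : IsMixed r) (hrf : r (fAct n C) = 0)
    (hrset : ∀ z : Act n C, IsSetAction z → r z = 0) : litMass r univ = 1 := by
  linarith [hr.setMass_add_litMass_add_fAct_eq_one, setMass_eq_zero hrset]

theorem eq_negLit_comm {l l' : Lit n} : l = negLit l' ↔ l' = negLit l := by
  obtain ⟨i, b⟩ := l
  obtain ⟨j, b'⟩ := l'
  cases b <;> cases b' <;> simp [negLit, eq_comm]

theorem payoff_litAct_of_eq_zero (hrf : r (fAct n C) = 0)
    (hrset : ∀ z : Act n C, IsSetAction z → r z = 0) (l : Lit n) :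
    payoff (gu n C) r (litAct l) =
      ((n : ℝ) - 1) * litMass r univ - (2 * n - 1) * r (litAct (negLit l)) := by
  have hvar : ∀ i, r (varAct i) = 0 := fun i => hrset _ (Or.inl ⟨i, rfl⟩)
  have hclause : ∀ c, r (clauseAct c) = 0 := fun c => hrset _ (Or.inr ⟨c, rfl⟩)
  have hneg : ∀ l' : Lit n, (l = negLit l') = (l' ∈ ({negLit l} : Finset (Lit n))) :=
    fun l' => by rw [mem_singleton, eq_negLit_comm]
  simp only [payoff, sum_act, hrf, hvar, hclause, zero_mul, sum_const_zero, zero_add, add_zero]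
  simp only [gu, hneg, sum_mul_ite_mem, sum_singleton, litMass]
  ring

namespace IsEnvyProofBestReply

variable {s : Act n C → ℝ} {v w : ℝ}

theorem fAct_le_sub (hn : 1 ≤ n) (h : IsEnvyProofBestReply (gu n C) r s v w) :
    s (fAct n C) ≤ v - w := by
  have hsum := sum_le_sum fun i (_ : i ∈ univ) => h.payoff_sub_le (varAct i)
  simp only [payoff_sub_swap_payoff_setAction (Or.inl ⟨_, rfl⟩), sum_add_distrib,
    sum_sub_distrib, ← mul_sum, sum_litMass_litSet_varAct, sum_const, card_univ,
    Fintype.card_fin, nsmul_eq_mul] at hsum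
  have hn' : (0 : ℝ) < n := by exact_mod_cast hn
  exact le_of_mul_le_mul_left (by linarith) hn'

theorem eq_zero_of_isSetAction (hn : 1 ≤ n) (hr : IsEnvyProofBestReply (gu n C) r s v v)
    (hs : IsEnvyProofBestReply (gu n C) s r v v) (hrf : r (fAct n C) = 0)
    (hsf : s (fAct n C) = 0) {z : Act n C} (hz : IsSetAction z) : r z = 0 := by
  by_contra hne
  have hn' : (0 : ℝ) < n := by exact_mod_cast hn
  have hpos : 0 < r z := (hr.isMixed.1 z).lt_of_ne' hne
  have hs_eq := hr.payoff_eq hpos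
  have hs_swap_eq := hr.swap_payoff_eq hpos
  have hs_le := hr.payoff_le (fAct n C)
  have hr_le := hs.payoff_le (fAct n C)
  rw [payoff_setAction hz, hsf] at hs_eq
  rw [swap_payoff_setAction hz, hsf] at hs_swap_eq
  rw [payoff_fAct, hsf] at hs_le
  rw [payoff_fAct, hrf] at hr_le
  -- Indifference and no envy at `z` give `2v = 2(n-1)·litMass s - 2n·setMass s`, while `f`
  -- earns `(n-1)·litMass s + n·setMass s ≤ v`.
  have hs_set : setMass s = 0 :=
    le_antisymm (nonpos_of_mul_nonpos_right (by linarith) hn') hs.isMixed.setMass_nonneg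
  have hs_lit : litMass s univ = 1 := by linarith [hs.isMixed.setMass_add_litMass_add_fAct_eq_one]
  have hv : v = n - 1 := by rw [hs_set, hs_lit] at hs_eq hs_swap_eq; linarith
  have hr_lit : litMass r univ = 1 - setMass r := by
    linarith [hr.isMixed.setMass_add_litMass_add_fAct_eq_one]
  rw [hr_lit, hv] at hr_le
  linarith [hr.isMixed.le_setMass hz]

theorem exists_pos_litAct_of_isSetAction (h : IsEnvyProofBestReply (gu n C) r s v v)
    (hsf : s (fAct n C) = 0) (hsL : litMass s univ = 1) {z : Act n C} (hz : IsSetAction z) :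
    ∃ l ∈ litSet z, 0 < s (litAct l) := by
  have henvy := h.payoff_sub_le z
  rw [payoff_sub_swap_payoff_setAction hz, hsf, hsL, sub_self] at henvy
  have hpos : 0 < litMass s (litSet z) := by
    by_contra! hle
    nlinarith [mul_nonpos_of_nonneg_of_nonpos (Nat.cast_nonneg n : (0 : ℝ) ≤ n) hle]
  exact exists_lt_of_sum_lt (by simpa [litMass] using hpos)

theorem litAct_negLit_eq_zero (hn : 1 ≤ n) (h : IsEnvyProofBestReply (gu n C) s r v w)
    (hr : IsMixed r) (hrf : r (fAct n C) = 0) (hrset : ∀ z : Act n C, IsSetAction z → r z = 0)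
    {l : Lit n} (hl : 0 < s (litAct l)) : r (litAct (negLit l)) = 0 := by
  have hn' : (1 : ℝ) ≤ n := by exact_mod_cast hn
  have hlit := h.payoff_eq hl
  have hf := h.payoff_le (fAct n C)
  rw [payoff_litAct_of_eq_zero hrf hrset] at hlit
  rw [payoff_fAct, hrf, setMass_eq_zero hrset] at hf
  have hneg := hr.1 (litAct (negLit l))
  nlinarith

theorem not_pos_and_pos_negLit (hn : 1 ≤ n) (h : IsEnvyProofBestReply (gu n C) s r v v)
    (hr : IsMixed r) (hrf : r (fAct n C) = 0) (hrset : ∀ z : Act n C, IsSetAction z → r z = 0)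
    (l : Lit n) : ¬(0 < s (litAct l) ∧ 0 < s (litAct (negLit l))) := by
  rintro ⟨hl, hnl⟩
  have hr_nl := h.litAct_negLit_eq_zero hn hr hrf hrset hl
  have hr_l := h.litAct_negLit_eq_zero hn hr hrf hrset hnl
  obtain ⟨l', hl', hpos⟩ := h.exists_pos_litAct_of_isSetAction hrf
    (hr.litMass_univ_eq_one hrf hrset) (Or.inl ⟨l.1, rfl⟩)
  obtain ⟨i, b⟩ := l
  obtain ⟨j, b'⟩ := l'
  obtain rfl : j = i := mem_litSet_varAct.1 hl'
  cases b <;> cases b' <;> simp_all [negLit]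

end IsEnvyProofBestReply

theorem decide_pos_eq_of_not_and {x : Lit n → ℝ}
    (hx : ∀ l, ¬(0 < x l ∧ 0 < x (negLit l))) {l : Lit n} (hl : 0 < x l) :
    decide (0 < x (l.1, true)) = l.2 := by
  obtain ⟨i, b⟩ := l
  cases b
  · simpa [negLit] using fun htrue => hx (i, false) ⟨hl, htrue⟩
  · simpa using hl

end CNFGame

theorem envyProof_nash_implies_satisfiable_general
    (n : ℕ) (hn : 1 ≤ n) (C : Finset (Finset (Lit n)))
    (h : ∃ (p q : Act n C → ℝ), IsMixed p ∧ IsMixed q ∧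
        IsNash (gu n C) (fun x y => gu n C y x) p q ∧
        IsEnvyProof (gu n C) (fun x y => gu n C y x) p q) :
    ∃ σ : Fin n → Bool, ∀ c ∈ C, ∃ l ∈ c, σ l.1 = l.2 := by
  obtain ⟨p, q, hp, hq, hN, hE⟩ := h
  obtain ⟨hP, hQ⟩ := isEnvyProofBestReply_of_isNash_of_isEnvyProof hp hq hN hE
  have hq_f_le := hP.fAct_le_sub hn
  have hp_f_le := hQ.fAct_le_sub hn
  have hq_f : q (fAct n C) = 0 := by linarith [hp.1 (fAct n C), hq.1 (fAct n C)]
  have hp_f : p (fAct n C) = 0 := by linarith [hp.1 (fAct n C), hq.1 (fAct n C)]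
  have hv : EU (swap (gu n C)) p q = EU (gu n C) p q := by linarith
  rw [hv] at hP hQ
  have hp_set := fun z => hP.eq_zero_of_isSetAction hn hQ hp_f hq_f (z := z)
  have hq_set := fun z => hQ.eq_zero_of_isSetAction hn hP hq_f hp_f (z := z)
  refine ⟨fun i => decide (0 < q (litAct (i, true))), fun c hc => ?_⟩
  obtain ⟨l, hl, hql⟩ := hP.exists_pos_litAct_of_isSetAction hq_f
    (hq.litMass_univ_eq_one hq_f hq_set) (z := clauseAct ⟨c, hc⟩) (Or.inr ⟨_, rfl⟩)
  exact ⟨l, hl, decide_pos_eq_of_not_and (hQ.not_pos_and_pos_negLit hn hp hp_f hp_set) hql⟩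

/-- if `G(φ)` admits a mixed strategy profile that is both a Nash
equilibrium and envy-proof, then `φ` is satisfiable. -/
theorem envyProof_nash_implies_satisfiable
    (n : ℕ) (hn : 1 ≤ n) (C : Finset (Finset (Lit n)))
    (hC : ∀ c ∈ C, c.Nonempty)
    (h : ∃ (p q : Act n C → ℝ), IsMixed p ∧ IsMixed q ∧
        IsNash (gu n C) (fun x y => gu n C y x) p q ∧
        IsEnvyProof (gu n C) (fun x y => gu n C y x) p q) :
    ∃ σ : Fin n → Bool, ∀ c ∈ C, ∃ l ∈ c, σ l.1 = l.2 :=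
  envyProof_nash_implies_satisfiable_general n hn C h
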